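/- Masked Domain Adaptation Theorem: Let P be the original data distribution with true labeling f, let P' denote the pseudo-labeled original domain (distribution P with pseudo-labels ŷ) and Q' the pseudo-labeled masked domain (distribution Q with pseudo-labels ŷ_Q), where the pseudo-label noise ratio is at most γ on both domains, i.e., P({ŷ ≠ f}) ≤ γ and Q({ŷ_Q ≠ f_Q}) ≤ γ with f_Q the true labeling on Q. Then for every h ∈ H: ε_P(h, f) ≤ (1/2)ε_P(h, ŷ) + (1/2)ε_Q(h, ŷ_Q) + (1/4)d_{HΔH}(P, Q) + (1/2)λ + γ, where λ = inf_{h' ∈ H}(ε_P(h', f) + ε_Q(h', f_Q)). -/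

import Mathlib

/-!
The error of `h` against the true labels is controlled in two ways: on the source side by
going through the pseudo-labels `ŷ` (costing the noise rate `γ`), and on the target side by
the classical domain-adaptation chain `h → h* → f`, moving the disagreement of `h` and `h*`
from `P` to `Q` at the price of half the `HΔH`-divergence and then passing through `ŷ_Q` and
`f_Q`. Averaging the two bounds gives the theorem.
-/

open MeasureTheory

/-- Disagreement error of two hypotheses/labelings under a distribution D. -/
noncomputable def errD {X : Type*} [MeasurableSpace X]
    (D : Measure X) (h g : X → Bool) : ℝ :=
  (D {x | h x ≠ g x}).toReal

/-- The HΔH-divergence between probability measures P and Q over a hypothesis class H. -/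
noncomputable def dHDH {X : Type*} [MeasurableSpace X]
    (H : Set (X → Bool)) (P Q : Measure X) : ℝ :=
  2 * sSup {r : ℝ | ∃ h ∈ H, ∃ h' ∈ H, r = |errD P h h' - errD Q h h'|}

section errD

variable {X : Type*} [MeasurableSpace X]

lemma errD_comm (D : Measure X) (h g : X → Bool) : errD D h g = errD D g h := by
  simp_rw [errD, ne_comm]

lemma errD_triangle (D : Measure X) [IsFiniteMeasure D] (a b c : X → Bool) :
    errD D a b ≤ errD D a c + errD D c b := by
  have hsub : {x | a x ≠ b x} ⊆ {x | a x ≠ c x} ∪ {x | c x ≠ b x} := by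
    intro x hab
    by_contra! hac
    simp_all
  calc D.real {x | a x ≠ b x}
      ≤ D.real ({x | a x ≠ c x} ∪ {x | c x ≠ b x}) := measureReal_mono hsub
    _ ≤ D.real {x | a x ≠ c x} + D.real {x | c x ≠ b x} := measureReal_union_le _ _

lemma abs_errD_sub_errD_le_one (P Q : Measure X) [IsZeroOrProbabilityMeasure P]
    [IsZeroOrProbabilityMeasure Q] (a b : X → Bool) :
    |errD P a b - errD Q a b| ≤ 1 :=
  abs_sub_le_of_nonneg_of_le measureReal_nonneg measureReal_le_one
    measureReal_nonneg measureReal_le_one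

lemma errD_le_errD_add_half_dHDH {H : Set (X → Bool)} (P Q : Measure X)
    [IsZeroOrProbabilityMeasure P] [IsZeroOrProbabilityMeasure Q]
    {h h' : X → Bool} (hh : h ∈ H) (hh' : h' ∈ H) :
    errD P h h' ≤ errD Q h h' + dHDH H P Q / 2 := by
  have hbdd : BddAbove {r : ℝ | ∃ h ∈ H, ∃ h' ∈ H, r = |errD P h h' - errD Q h h'|} := by
    refine ⟨1, ?_⟩
    rintro r ⟨a, -, b, -, rfl⟩
    exact abs_errD_sub_errD_le_one P Q a b
  have hle := (le_abs_self _).trans (le_csSup hbdd ⟨h, hh, h', hh', rfl⟩)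
  rw [dHDH]
  linarith

lemma errD_le_errD_add_half_dHDH_add_joint {H : Set (X → Bool)} (P Q : Measure X)
    [IsZeroOrProbabilityMeasure P] [IsZeroOrProbabilityMeasure Q]
    {h hstar : X → Bool} (hH : h ∈ H) (hstarH : hstar ∈ H) (f fQ g : X → Bool) :
    errD P h f ≤ errD Q h g + errD Q g fQ + dHDH H P Q / 2
      + (errD P hstar f + errD Q hstar fQ) :=
  calc errD P h f
      ≤ errD P h hstar + errD P hstar f := errD_triangle P h f hstar
    _ ≤ errD Q h hstar + dHDH H P Q / 2 + errD P hstar f := by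
        gcongr; exact errD_le_errD_add_half_dHDH P Q hH hstarH
    _ ≤ errD Q h fQ + errD Q fQ hstar + dHDH H P Q / 2 + errD P hstar f := by
        gcongr; exact errD_triangle Q h hstar fQ
    _ ≤ errD Q h g + errD Q g fQ + dHDH H P Q / 2
          + (errD P hstar f + errD Q hstar fQ) := by
        rw [errD_comm Q fQ hstar]
        linarith [errD_triangle Q h fQ g]

end errD

theorem masked_domain_adaptation_general {X : Type*} [MeasurableSpace X]
    (H : Set (X → Bool)) (P Q : Measure X)
    [IsProbabilityMeasure P] [IsProbabilityMeasure Q]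
    (f fQ yhat yhatQ : X → Bool)
    (γ : ℝ)
    (hnoiseP : (P {x | yhat x ≠ f x}).toReal ≤ γ)
    (hnoiseQ : (Q {x | yhatQ x ≠ fQ x}).toReal ≤ γ)
    (h : X → Bool) (hH : h ∈ H)
    (lam : ℝ) (hstar : X → Bool) (hstarH : hstar ∈ H)
    (hlam_eq : lam = errD P hstar f + errD Q hstar fQ) :
    errD P h f ≤ (1 / 2) * errD P h yhat + (1 / 2) * errD Q h yhatQ
      + (1 / 4) * dHDH H P Q + (1 / 2) * lam + γ := by
  have noiseP : errD P yhat f ≤ γ := hnoiseP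
  have noiseQ : errD Q yhatQ fQ ≤ γ := hnoiseQ
  have source : errD P h f ≤ errD P h yhat + γ := by
    linarith [errD_triangle P h f yhat]
  have target : errD P h f ≤ errD Q h yhatQ + γ + dHDH H P Q / 2 + lam := by
    rw [hlam_eq]
    linarith [errD_le_errD_add_half_dHDH_add_joint P Q hH hstarH f fQ yhatQ]
  linarith

/-- Masked Domain Adaptation Theorem:
ε_P(h, f) ≤ (1/2)ε_P(h, ŷ) + (1/2)ε_Q(h, ŷ_Q) + (1/4)d_{HΔH}(P,Q) + (1/2)λ + γ. -/
theorem masked_domain_adaptation {X : Type*} [MeasurableSpace X]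
    (H : Set (X → Bool)) (P Q : Measure X)
    [IsProbabilityMeasure P] [IsProbabilityMeasure Q]
    (f fQ yhat yhatQ : X → Bool)
    (hmf : Measurable f) (hmfQ : Measurable fQ)
    (hmy : Measurable yhat) (hmyQ : Measurable yhatQ)
    (hmeas : ∀ h ∈ H, Measurable h)
    (γ : ℝ)
    (hnoiseP : (P {x | yhat x ≠ f x}).toReal ≤ γ)
    (hnoiseQ : (Q {x | yhatQ x ≠ fQ x}).toReal ≤ γ)
    (h : X → Bool) (hH : h ∈ H)
    (lam : ℝ) (hstar : X → Bool) (hstarH : hstar ∈ H)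
    (hlam_eq : lam = errD P hstar f + errD Q hstar fQ)
    (hlam_min : ∀ h' ∈ H, lam ≤ errD P h' f + errD Q h' fQ) :
    errD P h f ≤ (1 / 2) * errD P h yhat + (1 / 2) * errD Q h yhatQ
      + (1 / 4) * dHDH H P Q + (1 / 2) * lam + γ :=
  masked_domain_adaptation_general H P Q f fQ yhat yhatQ γ hnoiseP hnoiseQ h hH lam hstar hstarH
    hlam_eq
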